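/- In the constrained scalar regression game with bound W > 0, suppose the least squares coefficients have opposite signs, w₁* < 0 < w₂*, and both satisfy |w_e*| ≤ W. Then (a†, b†) ∈ [−W,W]² is a pure Nash equilibrium if and only if (a†, b†) = (−W, W); in particular the ensemble coefficient at equilibrium is a† + b† = 0. -/
import Mathlib


/-- Scalar risk of environment `e` with variance weight `σ > 0` and least squares
coefficient `wstar` at joint actions `(a, b)`: `σ² ((a+b)² − 2 (a+b) wstar)`. -/
noncomputable def scalarRisk (σ wstar a b : ℝ) : ℝ :=
  σ ^ 2 * ((a + b) ^ 2 - 2 * (a + b) * wstar)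

set_option maxHeartbeats 1000000 in
/-- In the constrained scalar regression game with bound `W > 0`,
if the least squares coefficients have opposite signs, `w₁* < 0 < w₂*`, and
`|w₁*| ≤ W`, `|w₂*| ≤ W`, then `(a†, b†) ∈ [−W, W]²` is a pure Nash equilibrium
iff `(a†, b†) = (−W, W)`; in particular the ensemble coefficient is `0`. -/
theorem scalar_game_opposite_signs (σ₁ σ₂ : ℝ) (hσ₁ : 0 < σ₁) (hσ₂ : 0 < σ₂)
    (w₁ w₂ : ℝ) (h₁ : w₁ < 0) (h₂ : 0 < w₂) (W : ℝ) (hW : 0 < W)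
    (hb₁ : |w₁| ≤ W) (hb₂ : |w₂| ≤ W)
    (a b : ℝ) (ha : a ∈ Set.Icc (-W) W) (hb : b ∈ Set.Icc (-W) W) :
    ((∀ a' ∈ Set.Icc (-W) W, scalarRisk σ₁ w₁ a b ≤ scalarRisk σ₁ w₁ a' b) ∧
     (∀ b' ∈ Set.Icc (-W) W, scalarRisk σ₂ w₂ a b ≤ scalarRisk σ₂ w₂ a b')) ↔
    (a = -W ∧ b = W) := by
  obtain ⟨haL, haU⟩ := ha
  obtain ⟨hbL, hbU⟩ := hb
  have hw₁ : -W ≤ w₁ := (abs_le.mp hb₁).1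
  have hw₂ : w₂ ≤ W := (le_abs_self w₂).trans hb₂
  have hσ₁2 : (0:ℝ) < σ₁ ^ 2 := by positivity
  have hσ₂2 : (0:ℝ) < σ₂ ^ 2 := by positivity
  constructor
  · rintro ⟨H1, H2⟩
    have key1 : ∀ a' ∈ Set.Icc (-W) W, (a + b - w₁) ^ 2 ≤ (a' + b - w₁) ^ 2 := by
      intro a' ha'
      have h := H1 a' ha'
      unfold scalarRisk at h
      have h' := le_of_mul_le_mul_left (by linarith : σ₁ ^ 2 * ((a + b) ^ 2 - 2 * (a + b) * w₁) ≤ σ₁ ^ 2 * ((a' + b) ^ 2 - 2 * (a' + b) * w₁)) hσ₁2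
      nlinarith [h']
    have key2 : ∀ b' ∈ Set.Icc (-W) W, (a + b - w₂) ^ 2 ≤ (a + b' - w₂) ^ 2 := by
      intro b' hb'
      have h := H2 b' hb'
      unfold scalarRisk at h
      have h' := le_of_mul_le_mul_left (by linarith : σ₂ ^ 2 * ((a + b) ^ 2 - 2 * (a + b) * w₂) ≤ σ₂ ^ 2 * ((a + b') ^ 2 - 2 * (a + b') * w₂)) hσ₂2
      nlinarith [h']
    by_cases hc : -W ≤ w₁ - b
    · -- env 1's unconstrained optimum is feasible: a + b = w₁
      have hmem : w₁ - b ∈ Set.Icc (-W) W := ⟨hc, by linarith⟩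
      have h0 := key1 _ hmem
      have hab : a + b = w₁ := by nlinarith [sq_nonneg (a + b - w₁)]
      by_cases hd : w₂ - a ≤ W
      · have hmem2 : w₂ - a ∈ Set.Icc (-W) W := ⟨by linarith, hd⟩
        have h0' := key2 _ hmem2
        have : a + b = w₂ := by nlinarith [sq_nonneg (a + b - w₂)]
        linarith
      · have h0' := key2 W ⟨by linarith, le_refl W⟩
        -- (w₁ - w₂)² ≤ (a + W - w₂)² with a + W - w₂ < 0 forces a < -W
        exfalso
        clear key1 key2 H1 H2
        push_neg at hd
        have hn : w₁ + a + W - 2 * w₂ < 0 := by linarith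
        nlinarith [h0', hn]
    · push_neg at hc
      -- interval lies right of w₁: best response is a = -W
      have h0 := key1 (-W) ⟨le_refl _, by linarith⟩
      have hpos : 0 < a + 2 * b - 2 * w₁ - W := by linarith
      have haW : a = -W := by
        clear key1 key2 H1 H2
        have h1 : a ≤ -W := by nlinarith [h0, hpos]
        linarith
      have h0' := key2 W ⟨by linarith, le_refl W⟩
      have hneg : b - W - 2 * w₂ < 0 := by linarith
      subst haW
      have hbW : b = W := by
        clear key1 key2 H1 H2
        have h1 : W ≤ b := by nlinarith [h0', hneg]
        linarith
      exact ⟨rfl, hbW⟩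
  · rintro ⟨haE, hbE⟩
    rw [haE, hbE]
    constructor
    · intro a' ha'
      obtain ⟨h1, h2⟩ := ha'
      unfold scalarRisk
      nlinarith [sq_nonneg (a' + W), mul_nonneg (by linarith : (0:ℝ) ≤ a' + W) (by linarith : (0:ℝ) ≤ -w₁), sq_nonneg σ₁, mul_nonneg (mul_nonneg (le_of_lt hσ₁2) (by linarith : (0:ℝ) ≤ a' + W)) (by linarith : (0:ℝ) ≤ a' + W), mul_nonneg (le_of_lt hσ₁2) (mul_nonneg (by linarith : (0:ℝ) ≤ a' + W) (by linarith : (0:ℝ) ≤ -w₁))]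
    · intro b' hb'
      obtain ⟨h1, h2⟩ := hb'
      unfold scalarRisk
      nlinarith [mul_nonneg (mul_nonneg (le_of_lt hσ₂2) (by linarith : (0:ℝ) ≤ W - b')) (by linarith : (0:ℝ) ≤ W - b'), mul_nonneg (le_of_lt hσ₂2) (mul_nonneg (by linarith : (0:ℝ) ≤ W - b') (by linarith : (0:ℝ) ≤ w₂))]
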